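/- arXiv:2503.13350 — 2 statements merged into one kernel-verified Lean document; each statement's English description precedes it below -/
import Mathlib

section
/- If A, B ∈ SU(2) satisfy A*B*A⁻¹*B⁻¹ = -1, then the trace of A is 0 and the trace of B is 0. -/
open Matrix Complex

/-- `SU2` is the special unitary group of 2×2 complex matrices of determinant 1. -/
abbrev SU2 := Matrix.specialUnitaryGroup (Fin 2) ℂ

/-- The group structure on the special unitary group, with inverse given by
the conjugate transpose. -/
noncomputable instance instGroupSUC (n : ℕ) : Group (Matrix.specialUnitaryGroup (Fin n) ℂ) where
  inv A := ⟨star A.1, by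
    obtain ⟨hu, hd⟩ := Matrix.mem_specialUnitaryGroup_iff.mp A.2
    refine Matrix.mem_specialUnitaryGroup_iff.mpr ⟨Unitary.star_mem hu, ?_⟩
    rw [Matrix.star_eq_conjTranspose, Matrix.det_conjTranspose, hd, star_one]⟩
  inv_mul_cancel A :=
    Subtype.ext (Unitary.star_mul_self_of_mem (Matrix.mem_specialUnitaryGroup_iff.mp A.2).1)

/-- The element `-1` of `SU(2)`. -/
noncomputable def negOne : SU2 := ⟨-1, by
  refine Matrix.mem_specialUnitaryGroup_iff.mpr ⟨⟨?_, ?_⟩, ?_⟩ <;>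
    simp [Matrix.det_neg]⟩

/-!
If `AB = -BA` with `B` invertible, then `A = -BAB⁻¹`, so `tr A = -tr A` and `tr A = 0`.
In `SU(2)` the relation `ABA⁻¹B⁻¹ = -1` says exactly that `A` and `B` anticommute,
and both are invertible, so the argument applies to `A` and, symmetrically, to `B`.
-/

theorem Matrix.trace_eq_zero_of_mul_eq_neg_mul {n R : Type*} [Fintype n] [DecidableEq n]
    [CommRing R] [IsAddTorsionFree R] {a b : Matrix n n R} (hb : IsUnit b)
    (hab : a * b = -(b * a)) : a.trace = 0 := by
  obtain ⟨u, rfl⟩ := hb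
  have hconj : a = -((u : Matrix n n R) * a * (↑u⁻¹ : Matrix n n R)) := by
    rw [← neg_mul, ← hab, mul_assoc, Units.mul_inv, mul_one]
  have htrace : a.trace = -a.trace := by
    conv_lhs => rw [hconj]
    rw [trace_neg, trace_units_conj]
  exact self_eq_neg.mp htrace

theorem Matrix.isUnit_of_mem_specialUnitaryGroup {n R : Type*} [Fintype n] [DecidableEq n]
    [CommRing R] [StarRing R] {a : Matrix n n R} (ha : a ∈ specialUnitaryGroup n R) :
    IsUnit a :=
  (isUnit_iff_isUnit_det a).mpr ((mem_specialUnitaryGroup_iff.mp ha).2 ▸ isUnit_one)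

theorem coe_mul_eq_neg_mul_of_commutator_eq_negOne {A B : SU2}
    (h : A * B * A⁻¹ * B⁻¹ = negOne) :
    (A : Matrix (Fin 2) (Fin 2) ℂ) * B = -((B : Matrix (Fin 2) (Fin 2) ℂ) * A) := by
  have hgrp : A * B = negOne * (B * A) := by
    rw [← h]
    group
  simpa [negOne] using congrArg Subtype.val hgrp

/-- If `A, B ∈ SU(2)` satisfy `ABA⁻¹B⁻¹ = -1`, then `A` and `B` are both traceless. -/
theorem trace_eq_zero_of_commutator_negOne
    (A B : SU2) (h : A * B * A⁻¹ * B⁻¹ = negOne) :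
    Matrix.trace (A : Matrix (Fin 2) (Fin 2) ℂ) = 0 ∧
      Matrix.trace (B : Matrix (Fin 2) (Fin 2) ℂ) = 0 := by
  have hAB := coe_mul_eq_neg_mul_of_commutator_eq_negOne h
  exact ⟨trace_eq_zero_of_mul_eq_neg_mul (isUnit_of_mem_specialUnitaryGroup B.2) hAB,
    trace_eq_zero_of_mul_eq_neg_mul (isUnit_of_mem_specialUnitaryGroup A.2)
      (neg_eq_iff_eq_neg.mp hAB.symm)⟩
end

section
/- Fix g ≥ 2. Let L₂ be the set of tuples (A₁,...,A_g, B₁,...,B_g) ∈ SU(2)^{2g} such that B_i = 1 for 1 ≤ i ≤ g-1 and A_g*B_g*A_g⁻¹*B_g⁻¹ = -1. Then the map from SU(2)^{g-1} to the quotient of L₂ by simultaneous SU(2)-conjugation, sending (A₁,...,A_{g-1}) to the conjugation class of the tuple with these first g-1 entries, A_g = A₀, B_i = 1 for i ≤ g-1, and B_g = B₀, is a bijection. In particular the quotient of L₂ by simultaneous conjugation is in bijection with SU(2)^{g-1}. -/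
open Matrix Complex

/-- The element `A₀ = diag(i, -i)` of `SU(2)`. -/
noncomputable def A₀ : SU2 := ⟨!![I, 0; 0, -I], by
  refine Matrix.mem_specialUnitaryGroup_iff.mpr ⟨⟨?_, ?_⟩, ?_⟩
  · ext i j
    fin_cases i <;> fin_cases j <;>
      simp [Matrix.mul_apply, Fin.sum_univ_succ, Matrix.conjTranspose_apply]
  · ext i j
    fin_cases i <;> fin_cases j <;>
      simp [Matrix.mul_apply, Fin.sum_univ_succ, Matrix.conjTranspose_apply]
  · simp [Matrix.det_fin_two_of]⟩

/-- The element `B₀ = [[0,1],[-1,0]]` of `SU(2)`. -/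
noncomputable def B₀ : SU2 := ⟨!![0, 1; -1, 0], by
  refine Matrix.mem_specialUnitaryGroup_iff.mpr ⟨⟨?_, ?_⟩, ?_⟩
  · ext i j
    fin_cases i <;> fin_cases j <;>
      simp [Matrix.mul_apply, Fin.sum_univ_succ, Matrix.conjTranspose_apply]
  · ext i j
    fin_cases i <;> fin_cases j <;>
      simp [Matrix.mul_apply, Fin.sum_univ_succ, Matrix.conjTranspose_apply]
  · simp [Matrix.det_fin_two_of]⟩

@[simp] lemma coe_inv_SU2 (A : SU2) :
    ((A⁻¹ : SU2) : Matrix (Fin 2) (Fin 2) ℂ) = star (A : Matrix (Fin 2) (Fin 2) ℂ) := rfl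

/-- The commutator of the standard pair `(A₀, B₀)` is `-1`. -/
lemma commutator_A₀_B₀ : A₀ * B₀ * A₀⁻¹ * B₀⁻¹ = negOne := by
  apply Subtype.ext
  ext i j
  fin_cases i <;> fin_cases j <;>
    simp [A₀, B₀, negOne, Matrix.mul_apply, Matrix.vecMul, dotProduct,
      Fin.sum_univ_succ, Matrix.conjTranspose_apply]

/-- A tuple `(A₁,…,A_g,B₁,…,B_g)` of elements of `SU(2)`. -/
abbrev SU2Tuple (g : ℕ) := (Fin g → SU2) × (Fin g → SU2)

/-- Two tuples are related iff they are simultaneously conjugate by an element of `SU(2)`. -/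
def ConjRel {g : ℕ} (p q : SU2Tuple g) : Prop :=
  ∃ u : SU2, (∀ i, u * p.1 i * u⁻¹ = q.1 i) ∧ (∀ i, u * p.2 i * u⁻¹ = q.2 i)

/-- The last index `g` of a tuple `(A₁,…,A_g,B₁,…,B_g)`. -/
def lastIdx (g : ℕ) (hg : 2 ≤ g) : Fin g := ⟨g - 1, by omega⟩

/-- The Lagrangian `L₂ = L(H₂°, w₂)` of the paper (equation (1.9)): tuples with
`Bᵢ = 1` for `1 ≤ i ≤ g-1` and `A_g B_g A_g⁻¹ B_g⁻¹ = -1`. -/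
def L2set (g : ℕ) (hg : 2 ≤ g) : Set (SU2Tuple g) :=
  {p | (∀ i : Fin g, (i : ℕ) < g - 1 → p.2 i = 1) ∧
    p.1 (lastIdx g hg) * p.2 (lastIdx g hg) *
      (p.1 (lastIdx g hg))⁻¹ * (p.2 (lastIdx g hg))⁻¹ = negOne}

/-- The standard representative in `L₂` with prescribed first `g-1` entries `A₁,…,A_{g-1}`,
with `A_g = A₀`, `Bᵢ = 1` for `i ≤ g-1` and `B_g = B₀`. -/
noncomputable def stdL2 (g : ℕ) (v : Fin (g - 1) → SU2) : SU2Tuple g :=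
  (fun i => if h : (i : ℕ) < g - 1 then v ⟨i, h⟩ else A₀,
   fun i => if (i : ℕ) < g - 1 then 1 else B₀)

lemma stdL2_mem (g : ℕ) (hg : 2 ≤ g) (v : Fin (g - 1) → SU2) : stdL2 g v ∈ L2set g hg := by
  refine ⟨fun i hi => ?_, ?_⟩
  · simp [stdL2, if_pos hi]
  · have h : ¬ ((g - 1 : ℕ) < g - 1) := lt_irrefl _
    simp only [stdL2, lastIdx, dif_neg h, if_neg h]
    exact commutator_A₀_B₀

/-!
The commutator condition says that `A_g` and `B_g` anticommute. In `SU(2)` one has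
`X + X⁻¹ = tr X`, and anticommuting elements have trace zero, so `A_g² = B_g² = -1`.
If `X² = Y² = -1`, then `1 - YX` intertwines them: `Y (1 - YX) = X + Y = (1 - YX) X`, and since
`(1 - YX)* (1 - YX) = det (1 - YX) = 2 - tr (YX)` it is a nonzero multiple of an element of
`SU(2)` unless `X = -Y`. This conjugates `A_g` to `A₀`, and then, by an element commuting with `A₀`,
`B_g` to `B₀`; every point of `L₂` is thus conjugate to a standard tuple. Conversely, an element
conjugating one standard tuple to another commutes with `A₀` and `B₀`, hence is scalar and fixes
`A₁, …, A_{g-1}`.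
-/

open scoped ComplexOrder

namespace SU2

lemma coe_mul (x y : SU2) : ((x * y : SU2) : Matrix (Fin 2) (Fin 2) ℂ) = x.1 * y.1 := rfl

lemma coe_negOne : (negOne : Matrix (Fin 2) (Fin 2) ℂ) = -1 := rfl

lemma det_coe (W : SU2) : W.1.det = 1 := (mem_specialUnitaryGroup_iff.mp W.2).2

lemma star_mul_self (W : SU2) : star W.1 * W.1 = 1 := congrArg Subtype.val (inv_mul_cancel W)

lemma mul_star_self (W : SU2) : W.1 * star W.1 = 1 := congrArg Subtype.val (mul_inv_cancel W)

lemma add_star_eq_trace_smul (W : SU2) : W.1 + star W.1 = W.1.trace • 1 := by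
  have hadj : star W.1 = W.1.adjugate := by
    calc star W.1 = star W.1 * (W.1 * W.1.adjugate) := by
          rw [mul_adjugate, det_coe, one_smul, mul_one]
      _ = W.1.adjugate := by rw [← mul_assoc, star_mul_self, one_mul]
  rw [hadj, adjugate_fin_two, trace_fin_two]
  ext i j
  fin_cases i <;> fin_cases j <;> simp [add_comm]

lemma exists_eq_smul_of_star_mul_self_eq_smul {M : Matrix (Fin 2) (Fin 2) ℂ} {s : ℂ} (hs : s ≠ 0)
    (hMM : star M * M = s • 1) (hdet : M.det = s) : ∃ c : ℂ, ∃ u : SU2, u.1 = c • M := by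
  have hs_nonneg : 0 ≤ s := by
    have := (posSemidef_conjTranspose_mul_self M).diag_nonneg (i := 0)
    rwa [← star_eq_conjTranspose, hMM, Matrix.smul_apply, one_apply_eq, smul_eq_mul,
      mul_one] at this
  have hs_re : s = s.re := Complex.eq_re_of_ofReal_le (by rwa [Complex.ofReal_zero])
  have hr : 0 < s.re := by
    refine lt_of_le_of_ne (Complex.nonneg_iff.mp hs_nonneg).1 fun h => hs ?_
    rw [hs_re, ← h, Complex.ofReal_zero]
  set c : ℂ := ↑(√s.re)⁻¹
  have hcs : c * c * s = 1 := by
    rw [hs_re, ← Complex.ofReal_mul, ← Complex.ofReal_mul, ← sq, inv_pow,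
      Real.sq_sqrt hr.le, inv_mul_cancel₀ hr.ne', Complex.ofReal_one]
  refine ⟨c, ⟨c • M, mem_specialUnitaryGroup_iff.mpr ⟨?_, ?_⟩⟩, rfl⟩
  · rw [mem_unitaryGroup_iff', star_smul, smul_mul_smul_comm, hMM, smul_smul, Complex.star_def,
      Complex.conj_ofReal, hcs, one_smul]
  · rw [det_smul, hdet, Fintype.card_fin, sq, hcs]

lemma exists_eq_smul_one_sub {W : SU2} (hW : W ≠ 1) :
    ∃ c : ℂ, ∃ u : SU2, u.1 = c • (1 - W.1) := by
  have hMM : star (1 - W.1) * (1 - W.1) = (2 - W.1.trace) • 1 := by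
    simp only [star_sub, star_one, sub_mul, mul_sub, one_mul, mul_one, star_mul_self,
      sub_smul, ← add_star_eq_trace_smul, two_smul]
    abel
  refine exists_eq_smul_of_star_mul_self_eq_smul (fun h0 => hW (Subtype.ext ?_)) hMM ?_
  · rw [h0, zero_smul, star_eq_conjTranspose, conjTranspose_mul_self_eq_zero, sub_eq_zero] at hMM
    exact hMM.symm
  · have := det_coe W
    rw [det_fin_two] at this
    rw [det_fin_two, trace_fin_two]
    simp only [Matrix.sub_apply, one_apply_eq, one_apply_ne zero_ne_one, one_apply_ne one_ne_zero]
    linear_combination this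

lemma commute_negOne (x : SU2) : Commute negOne x :=
  Subtype.ext <| by simp only [coe_mul, coe_negOne, neg_one_mul, mul_neg_one]

lemma negOne_mul_negOne : negOne * negOne = 1 :=
  Subtype.ext <| by simp only [coe_mul, coe_negOne, neg_one_mul, neg_neg]; rfl

def Anticommute (x y : SU2) : Prop := x * y = negOne * (y * x)

lemma anticommute_of_commutator_eq_negOne {x y : SU2} (h : x * y * x⁻¹ * y⁻¹ = negOne) :
    Anticommute x y := by
  rw [Anticommute, ← h]; group

lemma Anticommute.symm {x y : SU2} (h : Anticommute x y) : Anticommute y x := by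
  rw [Anticommute, h, ← mul_assoc, negOne_mul_negOne, one_mul]

lemma Anticommute.conj {x y : SU2} (h : Anticommute x y) (u : SU2) :
    Anticommute (u * x * u⁻¹) (u * y * u⁻¹) := by
  calc u * x * u⁻¹ * (u * y * u⁻¹) = u * (x * y) * u⁻¹ := by group
    _ = u * negOne * (y * x) * u⁻¹ := by rw [h]; group
    _ = negOne * (u * y * u⁻¹ * (u * x * u⁻¹)) := by rw [← (commute_negOne u).eq]; group

lemma Anticommute.commute_mul {x y z : SU2} (hx : Anticommute z x) (hy : Anticommute z y) :
    Commute z (x * y) := by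
  calc z * (x * y) = negOne * (x * (negOne * (y * z))) := by
        rw [← mul_assoc, hx, mul_assoc, mul_assoc, hy]
    _ = x * y * z := by
      rw [← mul_assoc x, ← (commute_negOne x).eq, mul_assoc negOne x, ← mul_assoc,
        negOne_mul_negOne, one_mul, ← mul_assoc]

lemma Anticommute.trace_eq_zero {x y : SU2} (h : Anticommute x y) : x.1.trace = 0 := by
  have hconj : y⁻¹ * x * y = negOne * x := by
    rw [mul_assoc, h, ← mul_assoc, ← (commute_negOne _).eq, mul_assoc, inv_mul_cancel_left]
  have : x.1.trace = -x.1.trace :=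
    calc x.1.trace = (y * (y⁻¹ * x)).1.trace := by rw [mul_inv_cancel_left]
      _ = (y⁻¹ * x * y).1.trace := trace_mul_comm _ _
      _ = -x.1.trace := by rw [hconj, coe_mul, coe_negOne, neg_one_mul, trace_neg]
  linear_combination this / 2

lemma Anticommute.mul_self_eq_negOne {x y : SU2} (h : Anticommute x y) : x * x = negOne := by
  have hx : x.1 + star x.1 = 0 := by rw [add_star_eq_trace_smul, h.trace_eq_zero, zero_smul]
  refine Subtype.ext ?_
  rw [coe_mul, coe_negOne, ← mul_star_self x, eq_neg_iff_add_eq_zero, ← mul_add, hx, mul_zero]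

/- Up to a scalar, `1 - YX` conjugates `X` to `Y`; it vanishes exactly when `X = -Y`, and then `Z`
does the job. Anything commuting with `YX` and `Z` commutes with the conjugator. -/
lemma exists_conj_eq_of_mul_self_eq_negOne {X Y Z C : SU2} (hX : X * X = negOne)
    (hY : Y * Y = negOne) (hZ : Anticommute Z Y) (hCZ : Commute C Z)
    (hCYX : Commute C (Y * X)) : ∃ u : SU2, u * X * u⁻¹ = Y ∧ Commute C u := by
  by_cases hYX : Y * X = 1
  · refine ⟨Z, mul_inv_eq_of_eq_mul ?_, hCZ⟩
    have hX' : X = negOne * Y := by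
      refine (eq_inv_of_mul_eq_one_right hYX).trans (inv_eq_of_mul_eq_one_right ?_)
      rw [← mul_assoc, ← (commute_negOne Y).eq, mul_assoc, hY, negOne_mul_negOne]
    rw [hX', ← mul_assoc, ← (commute_negOne Z).eq, mul_assoc, hZ, ← mul_assoc, negOne_mul_negOne,
      one_mul]
  · obtain ⟨c, u, hu⟩ := exists_eq_smul_one_sub hYX
    have hX' : X.1 * X.1 = -1 := congrArg Subtype.val hX
    have hY' : Y.1 * Y.1 = -1 := congrArg Subtype.val hY
    have hC : C.1 * (Y.1 * X.1) = Y.1 * X.1 * C.1 := congrArg Subtype.val hCYX.eq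
    refine ⟨u, mul_inv_eq_of_eq_mul (Subtype.ext ?_), Subtype.ext ?_⟩
    · rw [coe_mul, coe_mul, hu, smul_mul_assoc, mul_smul_comm, coe_mul, sub_mul, mul_sub, one_mul,
        mul_one, mul_assoc, hX', ← mul_assoc, hY']
      noncomm_ring
    · rw [coe_mul, coe_mul, hu, smul_mul_assoc, mul_smul_comm, coe_mul, sub_mul, mul_sub, one_mul,
        mul_one, hC]

lemma exists_conj_eq_A₀_B₀ {A B : SU2} (h : A * B * A⁻¹ * B⁻¹ = negOne) :
    ∃ u : SU2, u * A * u⁻¹ = A₀ ∧ u * B * u⁻¹ = B₀ := by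
  have hAB := anticommute_of_commutator_eq_negOne h
  have hA₀B₀ := anticommute_of_commutator_eq_negOne commutator_A₀_B₀
  obtain ⟨u₁, hu₁, -⟩ := exists_conj_eq_of_mul_self_eq_negOne hAB.mul_self_eq_negOne
    hA₀B₀.mul_self_eq_negOne hA₀B₀.symm (Commute.one_left _) (Commute.one_left _)
  have hA₀B' : Anticommute A₀ (u₁ * B * u₁⁻¹) := hu₁ ▸ hAB.conj u₁
  obtain ⟨u₂, hu₂, hu₂A₀⟩ := exists_conj_eq_of_mul_self_eq_negOne hA₀B'.symm.mul_self_eq_negOne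
    hA₀B₀.symm.mul_self_eq_negOne hA₀B₀ (Commute.refl _) (hA₀B₀.commute_mul hA₀B')
  refine ⟨u₂ * u₁, ?_, ?_⟩
  · rw [← hu₂A₀.symm.mul_inv_cancel, ← hu₁]
    group
  · rw [← hu₂]
    group

lemma commute_of_commute_A₀_of_commute_B₀ {u : SU2} (hA : Commute u A₀) (hB : Commute u B₀)
    (x : SU2) : Commute u x := by
  have hA' : u.1 * A₀.1 = A₀.1 * u.1 := congrArg Subtype.val hA.eq
  have hB' : u.1 * B₀.1 = B₀.1 * u.1 := congrArg Subtype.val hB.eq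
  have h01 := congrFun (congrFun hA' 0) 1
  have h10 := congrFun (congrFun hA' 1) 0
  have h00 := congrFun (congrFun hB' 0) 1
  simp only [A₀, B₀, Matrix.mul_apply, Fin.sum_univ_two, of_apply, cons_val', cons_val_zero,
    cons_val_one, cons_val_fin_one, mul_zero, zero_mul, mul_one, one_mul, add_zero, zero_add,
    mul_neg, neg_mul] at h01 h10 h00
  have hI : 2 * I ≠ 0 := by simp
  have hu01 : u.1 0 1 = 0 :=
    (mul_eq_zero.mp (by linear_combination -h01 : 2 * I * u.1 0 1 = 0)).resolve_left hI
  have hu10 : u.1 1 0 = 0 :=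
    (mul_eq_zero.mp (by linear_combination h10 : 2 * I * u.1 1 0 = 0)).resolve_left hI
  have hu : u.1 = scalar (Fin 2) (u.1 0 0) := by
    ext i j
    fin_cases i <;> fin_cases j <;> simp [hu01, hu10, h00]
  refine Subtype.ext ?_
  rw [coe_mul, coe_mul, hu]
  exact (scalar_commute _ (Commute.all _) _).eq

end SU2

lemma conjRel_equivalence (g : ℕ) : Equivalence (@ConjRel g) where
  refl p := ⟨1, fun i => by simp, fun i => by simp⟩
  symm := fun ⟨u, h₁, h₂⟩ =>
    ⟨u⁻¹, fun i => by rw [← h₁ i]; group, fun i => by rw [← h₂ i]; group⟩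
  trans := fun ⟨u, h₁, h₂⟩ ⟨v, h₃, h₄⟩ =>
    ⟨v * u, fun i => by rw [← h₃ i, ← h₁ i]; group, fun i => by rw [← h₄ i, ← h₂ i]; group⟩

section stdL2

variable {g : ℕ} (v : Fin (g - 1) → SU2)

lemma stdL2_fst_of_lt {i : Fin g} (hi : (i : ℕ) < g - 1) : (stdL2 g v).1 i = v ⟨i, hi⟩ :=
  dif_pos hi

lemma stdL2_snd_of_lt {i : Fin g} (hi : (i : ℕ) < g - 1) : (stdL2 g v).2 i = 1 :=
  if_pos hi

lemma stdL2_fst_lastIdx (hg : 2 ≤ g) : (stdL2 g v).1 (lastIdx g hg) = A₀ :=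
  dif_neg (lt_irrefl _)

lemma stdL2_snd_lastIdx (hg : 2 ≤ g) : (stdL2 g v).2 (lastIdx g hg) = B₀ :=
  if_neg (lt_irrefl _)

end stdL2

lemma eq_lastIdx_of_not_lt {g : ℕ} (hg : 2 ≤ g) {i : Fin g} (hi : ¬(i : ℕ) < g - 1) :
    i = lastIdx g hg :=
  Fin.ext (by simp only [lastIdx]; omega)

lemma eq_of_conjRel_stdL2 {g : ℕ} (hg : 2 ≤ g) {v w : Fin (g - 1) → SU2}
    (h : ConjRel (stdL2 g v) (stdL2 g w)) : v = w := by
  obtain ⟨u, h₁, h₂⟩ := h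
  have hA := h₁ (lastIdx g hg)
  have hB := h₂ (lastIdx g hg)
  rw [stdL2_fst_lastIdx, stdL2_fst_lastIdx] at hA
  rw [stdL2_snd_lastIdx, stdL2_snd_lastIdx] at hB
  have hu := SU2.commute_of_commute_A₀_of_commute_B₀ (mul_inv_eq_iff_eq_mul.mp hA)
    (mul_inv_eq_iff_eq_mul.mp hB)
  funext i
  have hi := h₁ ⟨i, by omega⟩
  rwa [stdL2_fst_of_lt v i.2, stdL2_fst_of_lt w i.2, (hu _).mul_inv_cancel] at hi

lemma exists_conjRel_stdL2 {g : ℕ} {hg : 2 ≤ g} {p : SU2Tuple g} (hp : p ∈ L2set g hg) :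
    ∃ v, ConjRel (stdL2 g v) p := by
  obtain ⟨hB, hcomm⟩ := hp
  obtain ⟨u, hA₀, hB₀⟩ := SU2.exists_conj_eq_A₀_B₀ hcomm
  refine ⟨fun i => u * p.1 ⟨i, by omega⟩ * u⁻¹, u⁻¹, fun i => ?_, fun i => ?_⟩ <;>
    by_cases hi : (i : ℕ) < g - 1
  · rw [stdL2_fst_of_lt _ hi]; group
  · rw [eq_lastIdx_of_not_lt hg hi, stdL2_fst_lastIdx, ← hA₀]; group
  · rw [stdL2_snd_of_lt _ hi, hB i hi]; group
  · rw [eq_lastIdx_of_not_lt hg hi, stdL2_snd_lastIdx, ← hB₀]; group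

/-- The map from `SU(2)^{g-1}` to the quotient of `L₂` by simultaneous conjugation,
sending `(A₁,…,A_{g-1})` to the class of the tuple with these first `g-1` entries,
`A_g = A₀`, `Bᵢ = 1` for `i ≤ g-1`, and `B_g = B₀`, is a bijection.  In particular
the quotient of `L₂` by simultaneous conjugation is in bijection with `SU(2)^{g-1}`. -/
theorem L2_quotient_bijective_SU2_pow (g : ℕ) (hg : 2 ≤ g) :
    Function.Bijective
      (fun v : Fin (g - 1) → SU2 =>
        Quot.mk (fun p q : L2set g hg => ConjRel p.1 q.1)
          ⟨stdL2 g v, stdL2_mem g hg v⟩) := by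
  have hequiv : Equivalence (fun p q : L2set g hg => ConjRel p.1 q.1) :=
    (conjRel_equivalence g).comap Subtype.val
  constructor
  · intro v w h
    have hvw := hequiv.eqvGen_iff.mp (Quot.eqvGen_exact h)
    exact eq_of_conjRel_stdL2 hg hvw
  · refine Quot.ind fun p => ?_
    obtain ⟨v, hv⟩ := exists_conjRel_stdL2 p.2
    exact ⟨v, Quot.sound hv⟩
end
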